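/- arXiv:1705.11149 — 4 statements merged into one kernel-verified Lean document; each statement's English description precedes it below -/
import Mathlib

section
/- Let λ ∈ ℝ with λ ≠ n/β. Define g_λ ∈ ℓ²_ap(𝕋_n;ℂ) by g_λ(α) = (1 − βλ/n)^{(n/β)(α − β/n)} / (1 + |1 − βλ/n|^{−n}) for α ∈ 𝕋_n ∩ (−β, 0] (here (n/β)(α − β/n) ∈ {−n,…,−1} is an integer and 1 − βλ/n ≠ 0), extended to 𝕋_n by antiperiodicity. Then g_λ is the unique function f ∈ ℓ²_ap(𝕋_n;ℂ) satisfying the difference equation (𝔡f)(α) + λ f(α) = −2 δ_ap(α) for all α ∈ 𝕋_n. -/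
/-!
With `c = 1 - βλ/n ≠ 0` the difference equation reads `f (j + 1) = c f j - (2β/n) δ_ap j`.
The difference `h` of two antiperiodic solutions therefore satisfies `h j = c ^ j h 0` and
`h n = -h 0`; since `n` is even, `c ^ n > 0`, so `h = 0`. On the other hand, `g_λ` gets
multiplied by `c` at every step except at `0` and `n`, where the normalisation `1 + c ^ (-n)`
produces exactly the jumps `-1` and `+1` demanded by `-(2β/n) δ_ap`.
-/

noncomputable section

/-- The antiperiodic discrete delta function `δ_ap` on the discrete torus
`𝕋_n ≅ ZMod (2n)` (the point `j : ZMod (2n)` corresponds to `α = jβ/n`):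
`δ_ap(0) = n/(2β)`, `δ_ap(β) = -n/(2β)` and `δ_ap = 0` elsewhere. -/
def deltaAp (n : ℕ) (β : ℝ) (j : ZMod (2 * n)) : ℂ :=
  if j = 0 then (((n : ℝ) / (2 * β) : ℝ) : ℂ)
  else if j = (n : ZMod (2 * n)) then ((-((n : ℝ) / (2 * β)) : ℝ) : ℂ)
  else 0

/-- The function `g_λ ∈ ℓ²_ap(𝕋_n; ℂ)` (for `λ ≠ n/β`), defined on
`𝕋_n ∩ (-β, 0]` by `g_λ(α) = (1 - βλ/n)^{(n/β)(α - β/n)} / (1 + |1 - βλ/n|^{-n})`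
and extended to `𝕋_n` by antiperiodicity.  In the identification `𝕋_n ≅ ZMod (2n)`
(`j ↔ α = jβ/n`), the part `𝕋_n ∩ (-β, 0]` corresponds to `j.val = 0` and
`n + 1 ≤ j.val ≤ 2n - 1` (where `α = (j.val - 2n)β/n`), and the antiperiodic extension
gives the values for `1 ≤ j.val ≤ n`. -/
def gFun (n : ℕ) (β lam : ℝ) (j : ZMod (2 * n)) : ℂ :=
  if j.val = 0 then
    (((1 - β * lam / n) ^ (-1 : ℤ) / (1 + |1 - β * lam / n| ^ (-(n : ℤ))) : ℝ) : ℂ)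
  else if j.val ≤ n then
    ((-((1 - β * lam / n) ^ ((j.val : ℤ) - n - 1) / (1 + |1 - β * lam / n| ^ (-(n : ℤ)))) : ℝ) : ℂ)
  else
    (((1 - β * lam / n) ^ ((j.val : ℤ) - 2 * n - 1) / (1 + |1 - β * lam / n| ^ (-(n : ℤ))) : ℝ) : ℂ)

open Function

namespace ZMod

variable {m : ℕ}

theorem exists_natCast_eq_of_mem_Icc [NeZero m] (j : ZMod m) :
    ∃ k, 1 ≤ k ∧ k ≤ m ∧ (k : ZMod m) = j := by
  by_cases hj : j = 0
  · exact ⟨m, NeZero.one_le, le_rfl, by rw [hj, natCast_self]⟩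
  · exact ⟨j.val, Nat.one_le_iff_ne_zero.2 ((val_ne_zero j).2 hj), j.val_lt.le,
      natCast_zmod_val j⟩

theorem eq_zero_of_antiperiodic_of_add_one_eq_mul {R : Type*} [CommRing R] [NoZeroDivisors R]
    [NeZero m] {h : ZMod m → R} {c : R} {p : ℕ} (hanti : Antiperiodic h p)
    (hstep : ∀ j, h (j + 1) = c * h j) (hc : c ^ p ≠ -1) : h = 0 := by
  have hpow : ∀ k : ℕ, h k = c ^ k * h 0 := by
    intro k
    induction k with
    | zero => simp
    | succ k ih => rw [Nat.cast_succ, hstep, ih, pow_succ]; ring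
  have h0 : h 0 = 0 := by
    have hp : (c ^ p + 1) * h 0 = 0 := by
      linear_combination (hpow p).symm.trans (by simpa using hanti 0)
    exact (mul_eq_zero.1 hp).resolve_left fun h => hc (eq_neg_of_add_eq_zero_left h)
  funext j
  rw [← natCast_zmod_val j, hpow, h0, mul_zero, Pi.zero_apply]

end ZMod

def discreteDeriv (n : ℕ) (β : ℝ) (f : ZMod (2 * n) → ℂ) (j : ZMod (2 * n)) : ℂ :=
  ((n / β : ℝ) : ℂ) * (f (j + 1) - f j)

section

variable {n : ℕ} {β lam : ℝ}

theorem abs_zpow_neg_natCast_of_even (hn : Even n) (c : ℝ) :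
    |c| ^ (-(n : ℤ)) = c ^ (-(n : ℤ)) :=
  ((Int.even_coe_nat n).2 hn).neg.zpow_abs c

theorem zpow_neg_natCast_pos_of_even (hn : Even n) {c : ℝ} (hc : c ≠ 0) :
    0 < c ^ (-(n : ℤ)) :=
  ((Int.even_coe_nat n).2 hn).neg.zpow_pos hc

theorem one_sub_mul_div_ne_zero (hn : n ≠ 0) (hβ : β ≠ 0) (hlam : lam ≠ n / β) :
    1 - β * lam / n ≠ 0 := by
  rwa [sub_ne_zero, ne_comm, Ne, div_eq_one_iff_eq (Nat.cast_ne_zero.2 hn), mul_comm,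
    ← eq_div_iff hβ]

theorem discreteDeriv_add_mul_eq_iff (hn : n ≠ 0) (hβ : β ≠ 0) (f : ZMod (2 * n) → ℂ)
    (j : ZMod (2 * n)) (r : ℂ) :
    discreteDeriv n β f j + lam * f j = r ↔
      f (j + 1) = ((1 - β * lam / n : ℝ) : ℂ) * f j + ((β / n : ℝ) : ℂ) * r := by
  have hn' : (n : ℂ) ≠ 0 := Nat.cast_ne_zero.2 hn
  have hβ' : (β : ℂ) ≠ 0 := Complex.ofReal_ne_zero.2 hβ
  rw [discreteDeriv]
  push_cast
  constructor <;> intro h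
  · rw [← h]; field_simp; ring
  · rw [h]; field_simp; ring

theorem eq_of_antiperiodic_of_discreteDeriv_add_mul_eq [NeZero n] (hβ : β ≠ 0)
    (hc : ((1 - β * lam / n : ℝ) : ℂ) ^ n ≠ -1) {f g r : ZMod (2 * n) → ℂ}
    (hf : Antiperiodic f n) (hg : Antiperiodic g n)
    (hfr : ∀ j, discreteDeriv n β f j + lam * f j = r j)
    (hgr : ∀ j, discreteDeriv n β g j + lam * g j = r j) : f = g := by
  refine sub_eq_zero.1 (ZMod.eq_zero_of_antiperiodic_of_add_one_eq_mul (p := n) ?_ ?_ hc)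
  · intro j
    simp only [Pi.sub_apply, hf j, hg j, neg_sub_neg, neg_sub]
  · intro j
    simp only [Pi.sub_apply, (discreteDeriv_add_mul_eq_iff (NeZero.ne n) hβ _ _ _).1 (hfr j),
      (discreteDeriv_add_mul_eq_iff (NeZero.ne n) hβ _ _ _).1 (hgr j)]
    ring

theorem gFun_natCast_of_le {k : ℕ} (hk : 1 ≤ k) (hkn : k ≤ n) :
    gFun n β lam k = ((-((1 - β * lam / n) ^ ((k : ℤ) - n - 1) /
      (1 + |1 - β * lam / n| ^ (-(n : ℤ)))) : ℝ) : ℂ) := by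
  rw [gFun, ZMod.val_natCast_of_lt (by omega), if_neg (by omega), if_pos hkn]

theorem gFun_natCast_of_lt {k : ℕ} (hnk : n < k) (hk : k ≤ 2 * n) :
    gFun n β lam k = (((1 - β * lam / n) ^ ((k : ℤ) - 2 * n - 1) /
      (1 + |1 - β * lam / n| ^ (-(n : ℤ))) : ℝ) : ℂ) := by
  rcases hk.lt_or_eq with hk | rfl
  · rw [gFun, ZMod.val_natCast_of_lt hk, if_neg (by omega), if_neg (by omega)]
  · rw [ZMod.natCast_self, gFun, ZMod.val_zero, if_pos rfl]
    push_cast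
    ring_nf

theorem gFun_antiperiodic [NeZero n] : Antiperiodic (gFun n β lam) n := by
  intro j
  obtain ⟨k, hk1, hk2, rfl⟩ := ZMod.exists_natCast_eq_of_mem_Icc j
  rcases le_or_gt k n with hkn | hkn
  · rw [← Nat.cast_add, gFun_natCast_of_lt (by omega) (by omega), gFun_natCast_of_le hk1 hkn]
    push_cast
    ring_nf
  · have hcast : (k : ZMod (2 * n)) + n = ((k - n : ℕ) : ZMod (2 * n)) := by
      have h2n : ((2 * n : ℕ) : ZMod (2 * n)) = 0 := ZMod.natCast_self _
      push_cast [Nat.cast_sub hkn.le] at h2n ⊢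
      linear_combination h2n
    rw [hcast, gFun_natCast_of_le (by omega) (by omega), gFun_natCast_of_lt hkn hk2]
    push_cast [Nat.cast_sub hkn.le]
    ring_nf

theorem gFun_add_one_of_ne [NeZero n] (hc : 1 - β * lam / n ≠ 0) {j : ZMod (2 * n)}
    (hj0 : j ≠ 0) (hjn : j ≠ n) :
    gFun n β lam (j + 1) = ((1 - β * lam / n : ℝ) : ℂ) * gFun n β lam j := by
  obtain ⟨k, hk1, hk2, rfl⟩ := ZMod.exists_natCast_eq_of_mem_Icc j
  have hk2n : k ≠ 2 * n := by rintro rfl; exact hj0 (ZMod.natCast_self _)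
  have hkn : k ≠ n := by rintro rfl; exact hjn rfl
  rw [← Nat.cast_succ]
  rcases lt_or_gt_of_ne hkn with hkn | hkn
  · rw [gFun_natCast_of_le (by omega) (by omega), gFun_natCast_of_le hk1 hkn.le,
      show ((k.succ : ℕ) : ℤ) - n - 1 = (k - n - 1) + 1 by push_cast; ring, zpow_add_one₀ hc]
    push_cast
    ring
  · rw [gFun_natCast_of_lt (by omega) (by omega), gFun_natCast_of_lt hkn hk2,
      show ((k.succ : ℕ) : ℤ) - 2 * n - 1 = (k - 2 * n - 1) + 1 by push_cast; ring,
      zpow_add_one₀ hc]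
    push_cast
    ring

theorem gFun_one [NeZero n] (hn : Even n) (hc : 1 - β * lam / n ≠ 0) :
    gFun n β lam 1 = ((1 - β * lam / n : ℝ) : ℂ) * gFun n β lam 0 - 1 := by
  rw [← Nat.cast_one, gFun_natCast_of_le le_rfl NeZero.one_le, Nat.cast_one, gFun, ZMod.val_zero,
    if_pos rfl, abs_zpow_neg_natCast_of_even hn, sub_sub_cancel_left, zpow_neg_one]
  have hx := zpow_neg_natCast_pos_of_even hn hc
  generalize 1 - β * lam / n = c at hc hx ⊢
  generalize c ^ (-(n : ℤ)) = x at hx ⊢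
  have key : -(x / (1 + x)) = c * (c⁻¹ / (1 + x)) - 1 := by field_simp; ring
  exact_mod_cast key

theorem gFun_natCast_self_add_one [NeZero n] (hn : Even n) (hc : 1 - β * lam / n ≠ 0) :
    gFun n β lam (n + 1) = ((1 - β * lam / n : ℝ) : ℂ) * gFun n β lam n + 1 := by
  rw [← Nat.cast_succ, gFun_natCast_of_lt n.lt_succ_self (by have := NeZero.pos n; omega),
    gFun_natCast_of_le NeZero.one_le le_rfl, abs_zpow_neg_natCast_of_even hn,
    show ((n.succ : ℕ) : ℤ) - 2 * n - 1 = -n by push_cast; ring, sub_self, zero_sub]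
  have hx := zpow_neg_natCast_pos_of_even hn hc
  generalize 1 - β * lam / n = c at hc hx ⊢
  generalize c ^ (-(n : ℤ)) = x at hx ⊢
  have key : x / (1 + x) = c * -(c ^ (-1 : ℤ) / (1 + x)) + 1 := by
    rw [zpow_neg_one]; field_simp; ring
  exact_mod_cast key

theorem gFun_discreteDeriv_add_mul [NeZero n] (hβ : β ≠ 0) (hn : Even n)
    (hc : 1 - β * lam / n ≠ 0) (j : ZMod (2 * n)) :
    discreteDeriv n β (gFun n β lam) j + lam * gFun n β lam j = -2 * deltaAp n β j := by
  have hn0 : (n : ℂ) ≠ 0 := Nat.cast_ne_zero.2 (NeZero.ne n)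
  have hβ0 : (β : ℂ) ≠ 0 := Complex.ofReal_ne_zero.2 hβ
  rw [discreteDeriv_add_mul_eq_iff (NeZero.ne n) hβ, deltaAp]
  by_cases hj0 : j = 0
  · rw [if_pos hj0, hj0, zero_add, gFun_one hn hc]
    push_cast
    field_simp
    ring
  by_cases hjn : j = n
  · rw [if_neg hj0, if_pos hjn, hjn, gFun_natCast_self_add_one hn hc]
    push_cast
    field_simp
  · rw [if_neg hj0, if_neg hjn, gFun_add_one_of_ne hc hj0 hjn, mul_zero, mul_zero, add_zero]

end

/-- STATEMENT 4: For `λ ≠ n/β`, the function `g_λ` is antiperiodic and is the unique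
antiperiodic solution of the difference equation `(𝔡 f)(α) + λ f(α) = -2 δ_ap(α)`, where
`(𝔡 f)(α) = (n/β)(f(α + β/n) - f(α))`. -/
theorem gFun_solves_and_unique
    (n : ℕ) (hn : 2 ≤ n) (hn' : Even n) (β lam : ℝ) (hβ : 0 < β)
    (hlam : lam ≠ (n : ℝ) / β) :
    ((∀ j : ZMod (2 * n), gFun n β lam (j + n) = - gFun n β lam j) ∧
      (∀ j : ZMod (2 * n),
        (((n : ℝ) / β : ℝ) : ℂ) * (gFun n β lam (j + 1) - gFun n β lam j) +
            (lam : ℂ) * gFun n β lam j = -2 * deltaAp n β j)) ∧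
    (∀ f : ZMod (2 * n) → ℂ,
      (∀ j : ZMod (2 * n), f (j + n) = - f j) →
      (∀ j : ZMod (2 * n),
        (((n : ℝ) / β : ℝ) : ℂ) * (f (j + 1) - f j) + (lam : ℂ) * f j =
          -2 * deltaAp n β j) →
      f = gFun n β lam) := by
  have : NeZero n := ⟨by omega⟩
  have hc := one_sub_mul_div_ne_zero (NeZero.ne n) hβ.ne' hlam
  have hcn : ((1 - β * lam / n : ℝ) : ℂ) ^ n ≠ -1 := by
    rw [← Complex.ofReal_pow, ← Complex.ofReal_one, ← Complex.ofReal_neg, Ne,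
      Complex.ofReal_inj]
    exact ((hn'.pow_pos hc).trans' neg_one_lt_zero).ne'
  have hsolves := gFun_discreteDeriv_add_mul (lam := lam) hβ.ne' hn' hc
  exact ⟨⟨gFun_antiperiodic, hsolves⟩, fun f hf hfr =>
    eq_of_antiperiodic_of_discreteDeriv_add_mul_eq hβ.ne' hcn hf gFun_antiperiodic hfr hsolves⟩
end
end

section
/- For λ = n/β, the function g ∈ ℓ²_ap(𝕋_n;ℂ) defined by g(β/n) = −1, g(β/n − β) = 1, and g(α) = 0 for all other α ∈ 𝕋_n, is the unique function f ∈ ℓ²_ap(𝕋_n;ℂ) satisfying (𝔡f)(α) + (n/β) f(α) = −2 δ_ap(α) for all α ∈ 𝕋_n. -/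
/-!
Since `(n/β)(f(α + β/n) - f(α)) + (n/β) f(α) = (n/β) f(α + β/n)`, the equation prescribes every
value of `f` directly: `f(α + β/n) = -(2β/n) δ_ap(α)`. So `f` vanishes except at `β/n` and
`β + β/n = β/n - β`, where it equals `-1` and `1`; this is `g`, and it is antiperiodic because
translation by `β` swaps these two points.
-/

open scoped BigOperators

noncomputable section

/-- The function `g ∈ ℓ²_ap(𝕋_n; ℂ)` with `g(β/n) = -1`, `g(β/n - β) = 1` and `g = 0`
elsewhere (the point `j : ZMod (2n)` corresponds to `α = jβ/n`, so `β/n ↔ j = 1` and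
`β/n - β ↔ j = 1 - n`). -/
def gSing (n : ℕ) (j : ZMod (2 * n)) : ℂ :=
  if j = 1 then -1
  else if j = 1 - (n : ZMod (2 * n)) then 1
  else 0

namespace ZMod

theorem natCast_add_natCast_eq_zero_of_two_mul (n : ℕ) : (n : ZMod (2 * n)) + n = 0 := by
  rw [← Nat.cast_add, ZMod.natCast_eq_zero_iff, two_mul]

theorem neg_natCast_of_two_mul (n : ℕ) : -(n : ZMod (2 * n)) = n :=
  neg_eq_of_add_eq_zero_left (natCast_add_natCast_eq_zero_of_two_mul n)

theorem natCast_ne_zero_of_two_mul {n : ℕ} (hn : 0 < n) : (n : ZMod (2 * n)) ≠ 0 := by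
  rw [Ne, ZMod.natCast_eq_zero_iff]
  exact fun h => absurd (Nat.le_of_dvd hn h) (by omega)

end ZMod

theorem gSing_add_one (n : ℕ) (j : ZMod (2 * n)) :
    gSing n (j + 1) = if j = 0 then -1 else if j = n then 1 else 0 := by
  have h : (1 : ZMod (2 * n)) - n - 1 = n := by
    rw [sub_sub_cancel_left, ZMod.neg_natCast_of_two_mul]
  simp only [gSing, ← eq_sub_iff_add_eq, sub_self, h]

theorem ofReal_div_mul_gSing_add_one (n : ℕ) (β : ℝ) (j : ZMod (2 * n)) :
    (((n : ℝ) / β : ℝ) : ℂ) * gSing n (j + 1) = -2 * deltaAp n β j := by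
  rw [gSing_add_one, deltaAp]
  split_ifs <;> push_cast <;> ring

theorem gSing_add_natCast {n : ℕ} (hn : 0 < n) (j : ZMod (2 * n)) :
    gSing n (j + n) = -gSing n j := by
  have h : (1 : ZMod (2 * n)) - n - n = 1 := by
    rw [sub_sub, ZMod.natCast_add_natCast_eq_zero_of_two_mul, sub_zero]
  have hne : (1 : ZMod (2 * n)) ≠ 1 - n := by
    simpa [eq_sub_iff_add_eq] using ZMod.natCast_ne_zero_of_two_mul hn
  simp only [gSing, ← eq_sub_iff_add_eq, h]
  rw [ite_ite_comm (h := fun h₁ h₂ => hne (h₂.symm.trans h₁))]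
  split_ifs <;> norm_num

theorem gSing_solves_and_unique_general
    (n : ℕ) (hn : 2 ≤ n) (β : ℝ) (hβ : 0 < β) :
    ((∀ j : ZMod (2 * n), gSing n (j + n) = - gSing n j) ∧
      (∀ j : ZMod (2 * n),
        (((n : ℝ) / β : ℝ) : ℂ) * (gSing n (j + 1) - gSing n j) +
            (((n : ℝ) / β : ℝ) : ℂ) * gSing n j = -2 * deltaAp n β j)) ∧
    (∀ f : ZMod (2 * n) → ℂ,
      (∀ j : ZMod (2 * n), f (j + n) = - f j) →
      (∀ j : ZMod (2 * n),
        (((n : ℝ) / β : ℝ) : ℂ) * (f (j + 1) - f j) + (((n : ℝ) / β : ℝ) : ℂ) * f j =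
          -2 * deltaAp n β j) →
      f = gSing n) := by
  set c : ℂ := (((n : ℝ) / β : ℝ) : ℂ)
  have hc : c ≠ 0 := Complex.ofReal_ne_zero.mpr (div_pos (by positivity) hβ).ne'
  have hstep (f : ZMod (2 * n) → ℂ) (j : ZMod (2 * n)) :
      c * (f (j + 1) - f j) + c * f j = c * f (j + 1) := by ring
  refine ⟨⟨gSing_add_natCast (by omega), fun j => ?_⟩, fun f _ hf => funext fun j => ?_⟩
  · rw [hstep, ofReal_div_mul_gSing_add_one]
  · have hj := hf (j - 1)
    rw [hstep, ← ofReal_div_mul_gSing_add_one, sub_add_cancel] at hj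
    exact mul_left_cancel₀ hc hj

/-- For `λ = n/β`, the function `g` with `g(β/n) = -1`, `g(β/n - β) = 1` and
`g = 0` elsewhere is the unique antiperiodic solution of the difference equation
`(𝔡 f)(α) + (n/β) f(α) = -2 δ_ap(α)`, where `(𝔡 f)(α) = (n/β)(f(α + β/n) - f(α))`. -/
theorem gSing_solves_and_unique
    (n : ℕ) (hn : 2 ≤ n) (hn' : Even n) (β : ℝ) (hβ : 0 < β) :
    ((∀ j : ZMod (2 * n), gSing n (j + n) = - gSing n j) ∧
      (∀ j : ZMod (2 * n),
        (((n : ℝ) / β : ℝ) : ℂ) * (gSing n (j + 1) - gSing n j) +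
            (((n : ℝ) / β : ℝ) : ℂ) * gSing n j = -2 * deltaAp n β j)) ∧
    (∀ f : ZMod (2 * n) → ℂ,
      (∀ j : ZMod (2 * n), f (j + n) = - f j) →
      (∀ j : ZMod (2 * n),
        (((n : ℝ) / β : ℝ) : ℂ) * (f (j + 1) - f j) + (((n : ℝ) / β : ℝ) : ℂ) * f j =
          -2 * deltaAp n β j) →
      f = gSing n) :=
  gSing_solves_and_unique_general n hn β hβ
end
end

section
/- Let 𝒜, 𝔎, a, ρ be as in the context, with ρ satisfying the quasi-free vanishing condition (i) on normally ordered monomials. Then for all N₁, N₂ ∈ ℕ with N₁ ≠ N₂, every permutation π of {1,…,N₁+N₂}, and all φ₁,…,φ_{N₁+N₂} ∈ 𝔎: ρ(𝕆_π(a⁺(φ₁),…,a⁺(φ_{N₁}), a(φ_{N₁+N₂}),…,a(φ_{N₁+1}))) = 0. -/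
open scoped BigOperators

noncomputable section

/-- The signed monomial `𝕆_π(A₁, …, A_m) = (-1)^π A_{π⁻¹(1)} ⋯ A_{π⁻¹(m)}`
(the factor `A_k` is placed at position `π(k)`). -/
def Opi {𝒜 : Type*} [Ring 𝒜] {m : ℕ} (π : Equiv.Perm (Fin m)) (A : Fin m → 𝒜) : 𝒜 :=
  (Equiv.Perm.sign π : ℤ) • (List.ofFn fun i => A (π⁻¹ i)).prod

/-!
Call `#creators - #annihilators` the charge of a word in the operators `a⁺(φ)`, `a(φ)`.
Every word lies in the span of the normally ordered monomials of the same charge: prepending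
a creator keeps a normally ordered monomial normally ordered, and an annihilator is moved to
the right through the creators with `a(ψ) a⁺(χ) = ⟨ψ, χ⟩ - a⁺(χ) a(ψ)`, both of whose terms
have the charge of the left-hand side. Condition (i) says that `ρ` kills the normally ordered
monomials of non-zero charge, hence every word of non-zero charge.
-/

namespace CAR

variable {𝒜 : Type*} [Ring 𝒜] [StarRing 𝒜] {𝔎 : Type*} (a : 𝔎 → 𝒜)

def normalMonomial (T F : List 𝔎) : 𝒜 :=
  (T.map fun φ => star (a φ)).prod * (F.map a).prod

def op : 𝔎 ⊕ 𝔎 → 𝒜 :=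
  Sum.elim (fun φ => star (a φ)) a

def charge : 𝔎 ⊕ 𝔎 → ℤ :=
  Sum.elim (fun _ => 1) (fun _ => -1)

lemma star_mul_normalMonomial (χ : 𝔎) (T F : List 𝔎) :
    star (a χ) * normalMonomial a T F = normalMonomial a (χ :: T) F := by
  simp only [normalMonomial, List.map_cons, List.prod_cons, mul_assoc]

variable [Algebra ℂ 𝒜]

def normalSpan (d : ℤ) : Submodule ℂ 𝒜 :=
  Submodule.span ℂ
    {normalMonomial a T F | (T : List 𝔎) (F : List 𝔎) (_ : (T.length : ℤ) - F.length = d)}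

lemma normalMonomial_mem_normalSpan (T F : List 𝔎) :
    normalMonomial a T F ∈ normalSpan a (T.length - F.length) :=
  Submodule.subset_span ⟨T, F, rfl, rfl⟩

lemma star_mul_mem_normalSpan (χ : 𝔎) {d : ℤ} {x : 𝒜} (hx : x ∈ normalSpan a d) :
    star (a χ) * x ∈ normalSpan a (d + 1) := by
  have : (normalSpan a d).map (LinearMap.mulLeft ℂ (star (a χ))) ≤ normalSpan a (d + 1) := by
    refine Submodule.map_span_le _ _ _ |>.mpr ?_
    rintro _ ⟨T, F, rfl, rfl⟩
    rw [LinearMap.mulLeft_apply, star_mul_normalMonomial]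
    convert normalMonomial_mem_normalSpan a (χ :: T) F using 2
    simp only [List.length_cons, Nat.cast_succ]
    ring
  exact this ⟨x, hx, rfl⟩

lemma normalSpan_le_ker {ρ : 𝒜 →ₗ[ℂ] ℂ}
    (hQF0 : ∀ (N₁ N₂ : ℕ), N₁ ≠ N₂ → ∀ (φ : Fin N₁ → 𝔎) (ψ : Fin N₂ → 𝔎),
      ρ ((List.ofFn fun i : Fin N₁ => star (a (φ i))).prod *
          (List.ofFn fun i : Fin N₂ => a (ψ i.rev)).prod) = 0)
    {d : ℤ} (hd : d ≠ 0) : normalSpan a d ≤ LinearMap.ker ρ := by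
  refine Submodule.span_le.mpr ?_
  rintro _ ⟨T, F, hTF, rfl⟩
  have hlen : T.length ≠ F.length := by omega
  rw [SetLike.mem_coe, LinearMap.mem_ker, normalMonomial, ← List.ofFn_getElem_eq_map T]
  simpa [List.ofFn_getElem_eq_map] using
    hQF0 T.length F.length hlen (fun i => T[i]) (fun i => F[i.rev])

variable {a} [NormedAddCommGroup 𝔎] [InnerProductSpace ℂ 𝔎]

lemma mul_normalMonomial_mem_normalSpan
    (hCAR2 : ∀ φ₁ φ₂ : 𝔎,
      star (a φ₁) * a φ₂ + a φ₂ * star (a φ₁) = (inner ℂ φ₂ φ₁ : ℂ) • (1 : 𝒜))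
    (ψ : 𝔎) (T F : List 𝔎) :
    a ψ * normalMonomial a T F ∈ normalSpan a (T.length - F.length - 1) := by
  induction T with
  | nil =>
    have hcharge : (([] : List 𝔎).length : ℤ) - F.length - 1 = 0 - (ψ :: F).length := by
      simp only [List.length_nil, List.length_cons, Nat.cast_succ]
      ring
    rw [hcharge]
    simpa [normalMonomial] using normalMonomial_mem_normalSpan a [] (ψ :: F)
  | cons χ T ih =>
    have hswap : a ψ * star (a χ) = (inner ℂ ψ χ : ℂ) • (1 : 𝒜) - star (a χ) * a ψ := by
      rw [← hCAR2 χ ψ]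
      abel
    have hexpand : a ψ * normalMonomial a (χ :: T) F =
        (inner ℂ ψ χ : ℂ) • normalMonomial a T F - star (a χ) * (a ψ * normalMonomial a T F) := by
      rw [← star_mul_normalMonomial, ← mul_assoc, hswap, sub_mul, smul_mul_assoc, one_mul,
        mul_assoc]
    have hcharge : ((χ :: T).length : ℤ) - F.length - 1 = T.length - F.length := by
      simp only [List.length_cons, Nat.cast_succ]
      ring
    rw [hexpand, hcharge]
    refine Submodule.sub_mem _ (Submodule.smul_mem _ _ (normalMonomial_mem_normalSpan a T F)) ?_
    simpa using star_mul_mem_normalSpan a χ ih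

lemma mul_mem_normalSpan
    (hCAR2 : ∀ φ₁ φ₂ : 𝔎,
      star (a φ₁) * a φ₂ + a φ₂ * star (a φ₁) = (inner ℂ φ₂ φ₁ : ℂ) • (1 : 𝒜))
    (ψ : 𝔎) {d : ℤ} {x : 𝒜} (hx : x ∈ normalSpan a d) :
    a ψ * x ∈ normalSpan a (d - 1) := by
  have : (normalSpan a d).map (LinearMap.mulLeft ℂ (a ψ)) ≤ normalSpan a (d - 1) := by
    refine Submodule.map_span_le _ _ _ |>.mpr ?_
    rintro _ ⟨T, F, rfl, rfl⟩
    exact mul_normalMonomial_mem_normalSpan hCAR2 ψ T F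
  exact this ⟨x, hx, rfl⟩

lemma prod_map_op_mem_normalSpan
    (hCAR2 : ∀ φ₁ φ₂ : 𝔎,
      star (a φ₁) * a φ₂ + a φ₂ * star (a φ₁) = (inner ℂ φ₂ φ₁ : ℂ) • (1 : 𝒜))
    (w : List (𝔎 ⊕ 𝔎)) : (w.map (op a)).prod ∈ normalSpan a (w.map charge).sum := by
  induction w with
  | nil => simpa [normalMonomial] using normalMonomial_mem_normalSpan a [] []
  | cons x w ih =>
    simp only [List.map_cons, List.prod_cons, List.sum_cons]
    rcases x with χ | ψ
    · simpa [op, charge, add_comm] using star_mul_mem_normalSpan a χ ih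
    · simpa [op, charge, neg_add_eq_sub] using mul_mem_normalSpan hCAR2 ψ ih

end CAR

open CAR

/-- STATEMENT 9: Let `a : 𝔎 → 𝒜` satisfy the CAR and let `ρ` be a normalized linear
functional vanishing on normally ordered monomials with different numbers of creation and
annihilation operators.  Then for `N₁ ≠ N₂`, any permutation `π` and any
`φ₁, …, φ_{N₁+N₂} ∈ 𝔎`,
`ρ(𝕆_π(a⁺(φ₁), …, a⁺(φ_{N₁}), a(φ_{N₁+N₂}), …, a(φ_{N₁+1}))) = 0`. -/
theorem quasiFree_vanishing_on_unbalanced_monomials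
    {𝒜 : Type*} [Ring 𝒜] [Algebra ℂ 𝒜] [StarRing 𝒜]
    {𝔎 : Type*} [NormedAddCommGroup 𝔎] [InnerProductSpace ℂ 𝔎]
    (a : 𝔎 → 𝒜)
    (hCAR2 : ∀ φ₁ φ₂ : 𝔎,
      star (a φ₁) * a φ₂ + a φ₂ * star (a φ₁) = (inner ℂ φ₂ φ₁ : ℂ) • (1 : 𝒜))
    (ρ : 𝒜 →ₗ[ℂ] ℂ)
    (hQF0 : ∀ (N₁ N₂ : ℕ), N₁ ≠ N₂ → ∀ (φ : Fin N₁ → 𝔎) (ψ : Fin N₂ → 𝔎),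
      ρ ((List.ofFn fun i : Fin N₁ => star (a (φ i))).prod *
          (List.ofFn fun i : Fin N₂ => a (ψ i.rev)).prod) = 0)
    (N₁ N₂ : ℕ) (hN : N₁ ≠ N₂) (π : Equiv.Perm (Fin (N₁ + N₂)))
    (φ : Fin (N₁ + N₂) → 𝔎) :
    ρ (Opi π (fun q : Fin (N₁ + N₂) =>
        if h : (q : ℕ) < N₁ then star (a (φ q))
        else a (φ ⟨2 * N₁ + N₂ - 1 - (q : ℕ), by have := q.isLt; omega⟩))) = 0 := by
  let w : Fin (N₁ + N₂) → 𝔎 ⊕ 𝔎 := fun q =>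
    if h : (q : ℕ) < N₁ then .inl (φ q)
    else .inr (φ ⟨2 * N₁ + N₂ - 1 - (q : ℕ), by have := q.isLt; omega⟩)
  have hop : (fun q : Fin (N₁ + N₂) =>
      if h : (q : ℕ) < N₁ then star (a (φ q))
      else a (φ ⟨2 * N₁ + N₂ - 1 - (q : ℕ), by have := q.isLt; omega⟩)) = op a ∘ w := by
    funext q
    by_cases h : (q : ℕ) < N₁ <;> simp [w, op, h]
  have hcharge : ((List.ofFn (w ∘ ⇑π⁻¹)).map charge).sum = (N₁ : ℤ) - N₂ :=
    calc ((List.ofFn (w ∘ ⇑π⁻¹)).map charge).sum = ∑ q, charge (w (π⁻¹ q)) := by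
          simp [List.sum_ofFn]
      _ = ∑ q, charge (w q) := Equiv.sum_comp π⁻¹ fun q => charge (w q)
      _ = N₁ - N₂ := by
          simp [Fin.sum_univ_add, w, charge, sub_eq_add_neg]
  have hmem := prod_map_op_mem_normalSpan hCAR2 (List.ofFn (w ∘ ⇑π⁻¹))
  rw [hcharge] at hmem
  have hvanish := normalSpan_le_ker a hQF0 (sub_ne_zero.mpr (Nat.cast_injective.ne hN)) hmem
  rw [hop, Opi, map_zsmul, ← Function.comp_def (op a ∘ w), Function.comp_assoc, ← List.map_ofFn,
    LinearMap.mem_ker.mp hvanish, smul_zero]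
end
end

section
/- (Hölder consequence for density matrices.) Let F be a nonempty finite type and D ∈ Matrix F F ℂ a positive definite matrix with trace 1. Then for every N ∈ ℕ, all r₁,…,r_N ∈ [0,∞) with r₁ + ⋯ + r_N ≤ 1/2, and all matrices A₁,…,A_N ∈ Matrix F F ℂ: ‖ D^{r₁} A₁ D^{r₂} A₂ ⋯ D^{r_N} A_N D^{1/2 − (r₁+⋯+r_N)} ‖_Frob ≤ ∏_{q=1}^N ‖A_q‖, where ‖·‖_Frob is the Frobenius (Hilbert–Schmidt) norm, ‖·‖ is the ℓ²-operator norm, and D^r denotes the real power of the positive definite matrix D (defined via its spectral decomposition/functional calculus). -/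
open scoped BigOperators ComplexOrder

noncomputable section

/-- The real power `D^r` of a Hermitian (in application: positive definite) matrix `D`,
defined by applying `x ↦ x^r` to the eigenvalues in a spectral decomposition
`D = U diag(eigenvalues) U*`. -/
def Matrix.IsHermitian.rpow {F : Type*} [Fintype F] [DecidableEq F] {D : Matrix F F ℂ}
    (hD : D.IsHermitian) (r : ℝ) : Matrix F F ℂ :=
  (hD.eigenvectorUnitary : Matrix F F ℂ) *
    Matrix.diagonal (fun i => ((hD.eigenvalues i ^ r : ℝ) : ℂ)) *
      star (hD.eigenvectorUnitary : Matrix F F ℂ)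

/-!
Diagonalize `D = U Λ U*`. Conjugation by `U` preserves the Frobenius and operator norms, so it
suffices to bound `‖Λ^{e₀} B₀ Λ^{e₁} ⋯ B_{n-1} Λ^{e_n}‖_F ≤ ∏ ‖B_q‖` for exponents `e ≥ 0`
with `∑ e = 1/2`. With no factor this is `‖Λ^{1/2}‖_F² = Tr Λ = 1`. Otherwise write the word
as `Λ^a C Λ^b` and let `s = a + b`. In the eigenbasis
`|(Λ^a C Λ^b)_{ik}|² = λ_i^{2a} λ_k^{2b} |C_{ik}|²`, and weighted AM–GM
`λ_i^{2a} λ_k^{2b} ≤ (a/s) λ_i^{2s} + (b/s) λ_k^{2s}` bounds the word by the larger of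
`‖Λ^s C‖_F` and `‖C Λ^s‖_F`; this replaces the three-lines theorem. In those two words one end
carries no power of `Λ`, so the outer factor `B₀` or `B_{n-1}` splits off by
`‖X Y‖_F ≤ ‖X‖ ‖Y‖_F`, and induction on `n` concludes.
-/

open scoped Matrix.Norms.L2Operator

namespace Matrix

section Frobenius

variable {𝕜 : Type*} [RCLike 𝕜] {l m n : Type*} [Fintype l] [Fintype m] [Fintype n]

def frobSq (X : Matrix m n 𝕜) : ℝ := ∑ i, ∑ k, ‖X i k‖ ^ 2

lemma frobSq_nonneg (X : Matrix m n 𝕜) : 0 ≤ frobSq X := by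
  unfold frobSq; positivity

lemma frobSq_conjTranspose (X : Matrix m n 𝕜) : frobSq Xᴴ = frobSq X := by
  rw [frobSq, Finset.sum_comm]
  simp [frobSq]

lemma frobSq_mul_le_left [DecidableEq m] (X : Matrix l m 𝕜) (Y : Matrix m n 𝕜) :
    frobSq (X * Y) ≤ ‖X‖ ^ 2 * frobSq Y := by
  have hcol (k : n) : ∑ i, ‖(X * Y) i k‖ ^ 2 ≤ ‖X‖ ^ 2 * ∑ j, ‖Y j k‖ ^ 2 := by
    have := X.l2_opNorm_mulVec (WithLp.toLp 2 fun j => Y j k)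
    rw [← sq_le_sq₀ (norm_nonneg _) (mul_nonneg (norm_nonneg _) (norm_nonneg _)), mul_pow,
      EuclideanSpace.norm_sq_eq, EuclideanSpace.norm_sq_eq] at this
    simpa [Matrix.mul_apply, Matrix.mulVec, dotProduct] using this
  calc frobSq (X * Y) = ∑ k, ∑ i, ‖(X * Y) i k‖ ^ 2 := Finset.sum_comm
    _ ≤ ∑ k, ‖X‖ ^ 2 * ∑ j, ‖Y j k‖ ^ 2 := Finset.sum_le_sum fun k _ => hcol k
    _ = ‖X‖ ^ 2 * frobSq Y := by rw [← Finset.mul_sum, frobSq, Finset.sum_comm]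

lemma frobSq_mul_le_right [DecidableEq m] [DecidableEq n] (X : Matrix l m 𝕜)
    (Y : Matrix m n 𝕜) :
    frobSq (X * Y) ≤ frobSq X * ‖Y‖ ^ 2 := by
  have := frobSq_mul_le_left Yᴴ Xᴴ
  rwa [← conjTranspose_mul, frobSq_conjTranspose, frobSq_conjTranspose,
    l2_opNorm_conjTranspose, mul_comm] at this

lemma frobSq_diagonal [DecidableEq m] (d : m → 𝕜) : frobSq (diagonal d) = ∑ i, ‖d i‖ ^ 2 := by
  refine Finset.sum_congr rfl fun i _ => ?_
  rw [Finset.sum_eq_single i (fun k _ hk => by simp [diagonal_apply_ne _ (Ne.symm hk)])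
    (by simp), diagonal_apply_eq]

lemma frobSq_diagonal_mul_mul_diagonal [DecidableEq m] [DecidableEq n] (d : m → 𝕜)
    (C : Matrix m n 𝕜) (d' : n → 𝕜) :
    frobSq (diagonal d * C * diagonal d') = ∑ i, ∑ k, ‖d i‖ ^ 2 * ‖C i k‖ ^ 2 * ‖d' k‖ ^ 2 := by
  simp only [frobSq, mul_diagonal, diagonal_mul, norm_mul, mul_pow]

end Frobenius

section DiagRpow

variable {F : Type*} [DecidableEq F] {lam : F → ℝ}

def diagRpow (lam : F → ℝ) (a : ℝ) : Matrix F F ℂ := diagonal fun i => ((lam i ^ a : ℝ) : ℂ)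

@[simp]
lemma diagRpow_zero (lam : F → ℝ) : diagRpow lam 0 = 1 := by
  simp [diagRpow]

variable [Fintype F]

lemma diagRpow_add (hlam : ∀ i, 0 ≤ lam i) {a b : ℝ} (ha : 0 ≤ a) (hb : 0 ≤ b) :
    diagRpow lam (a + b) = diagRpow lam a * diagRpow lam b := by
  simp only [diagRpow, diagonal_mul_diagonal, Real.rpow_add_of_nonneg (hlam _) ha hb,
    Complex.ofReal_mul]

lemma frobSq_diagRpow_half (hlam : ∀ i, 0 ≤ lam i) :
    frobSq (diagRpow lam (1 / 2)) = ∑ i, lam i := by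
  refine (frobSq_diagonal _).trans (Finset.sum_congr rfl fun i _ => ?_)
  rw [Complex.norm_real, Real.norm_eq_abs, sq_abs, ← Real.sqrt_eq_rpow, Real.sq_sqrt (hlam i)]

lemma frobSq_diagRpow_mul_mul_diagRpow (lam : F → ℝ) (a b : ℝ) (C : Matrix F F ℂ) :
    frobSq (diagRpow lam a * C * diagRpow lam b) =
      ∑ i, ∑ k, (lam i ^ a) ^ 2 * ‖C i k‖ ^ 2 * (lam k ^ b) ^ 2 := by
  simp only [diagRpow, frobSq_diagonal_mul_mul_diagonal, Complex.norm_real, Real.norm_eq_abs,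
    sq_abs]

lemma sq_rpow_mul_sq_rpow_le {x y : ℝ} (hx : 0 ≤ x) (hy : 0 ≤ y) {θ : ℝ} (h0 : 0 ≤ θ)
    (h1 : θ ≤ 1) (s : ℝ) :
    (x ^ (θ * s)) ^ 2 * (y ^ ((1 - θ) * s)) ^ 2 ≤ θ * (x ^ s) ^ 2 + (1 - θ) * (y ^ s) ^ 2 := by
  have hpow {z : ℝ} (hz : 0 ≤ z) (t : ℝ) : (z ^ (t * s)) ^ 2 = ((z ^ s) ^ 2) ^ t := by
    rw [mul_comm, Real.rpow_mul hz, sq, sq, Real.mul_rpow (by positivity) (by positivity)]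
  rw [hpow hx, hpow hy]
  exact Real.geom_mean_le_arith_mean2_weighted h0 (by linarith) (by positivity) (by positivity)
    (by ring)

lemma frobSq_diagRpow_interpolate (hlam : ∀ i, 0 ≤ lam i) {θ : ℝ} (h0 : 0 ≤ θ) (h1 : θ ≤ 1)
    (s : ℝ) (C : Matrix F F ℂ) :
    frobSq (diagRpow lam (θ * s) * C * diagRpow lam ((1 - θ) * s)) ≤
      θ * frobSq (diagRpow lam s * C) + (1 - θ) * frobSq (C * diagRpow lam s) := by
  have hleft : diagRpow lam s * C = diagRpow lam s * C * diagRpow lam 0 := by simp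
  have hright : C * diagRpow lam s = diagRpow lam 0 * C * diagRpow lam s := by simp
  rw [hleft, hright, frobSq_diagRpow_mul_mul_diagRpow, frobSq_diagRpow_mul_mul_diagRpow,
    frobSq_diagRpow_mul_mul_diagRpow, Finset.mul_sum, Finset.mul_sum, ← Finset.sum_add_distrib]
  refine Finset.sum_le_sum fun i _ => ?_
  rw [Finset.mul_sum, Finset.mul_sum, ← Finset.sum_add_distrib]
  refine Finset.sum_le_sum fun k _ => ?_
  have := sq_rpow_mul_sq_rpow_le (hlam i) (hlam k) h0 h1 s
  simp only [Real.rpow_zero, one_pow, mul_one, one_mul]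
  nlinarith [sq_nonneg ‖C i k‖]

lemma frobSq_diagRpow_mul_mul_diagRpow_le_max (hlam : ∀ i, 0 ≤ lam i) {a b : ℝ} (ha : 0 ≤ a)
    (hb : 0 ≤ b) (C : Matrix F F ℂ) :
    frobSq (diagRpow lam a * C * diagRpow lam b) ≤
      max (frobSq (diagRpow lam (a + b) * C)) (frobSq (C * diagRpow lam (a + b))) := by
  rcases (add_nonneg ha hb).eq_or_lt with hs | hs
  · obtain ⟨rfl, rfl⟩ : a = 0 ∧ b = 0 := ⟨by linarith, by linarith⟩
    simp
  · have hθ0 : 0 ≤ a / (a + b) := div_nonneg ha hs.le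
    have hθ1 : a / (a + b) ≤ 1 := (div_le_one hs).2 (by linarith)
    have hinterp := frobSq_diagRpow_interpolate hlam hθ0 hθ1 (a + b) C
    rw [div_mul_cancel₀ a hs.ne', show (1 - a / (a + b)) * (a + b) = b by field_simp; ring]
      at hinterp
    have hcombo := Convex.combo_le_max (frobSq (diagRpow lam (a + b) * C))
      (frobSq (C * diagRpow lam (a + b))) hθ0 (sub_nonneg.2 hθ1) (add_sub_cancel _ _)
    rw [smul_eq_mul, smul_eq_mul] at hcombo
    exact hinterp.trans hcombo

def diagRpowWord (lam : F → ℝ) {n : ℕ} (e : Fin (n + 1) → ℝ) (B : Fin n → Matrix F F ℂ) :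
    Matrix F F ℂ :=
  (List.ofFn fun q => diagRpow lam (e q.castSucc) * B q).prod * diagRpow lam (e (Fin.last n))

lemma diagRpowWord_zero (e : Fin 1 → ℝ) (B : Fin 0 → Matrix F F ℂ) :
    diagRpowWord lam e B = diagRpow lam (e 0) := by
  simp [diagRpowWord]

lemma diagRpowWord_succ {n : ℕ} (e : Fin (n + 2) → ℝ) (B : Fin (n + 1) → Matrix F F ℂ) :
    diagRpowWord lam e B =
      diagRpow lam (e 0) * B 0 * diagRpowWord lam (Fin.tail e) (Fin.tail B) := by
  simp only [diagRpowWord, List.ofFn_succ, List.prod_cons, Fin.tail, Fin.castSucc_zero,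
    Fin.succ_castSucc, Fin.succ_last, mul_assoc]

lemma diagRpowWord_succ' {n : ℕ} (e : Fin (n + 2) → ℝ) (B : Fin (n + 1) → Matrix F F ℂ) :
    diagRpowWord lam e B =
      diagRpowWord lam (Fin.init e) (Fin.init B) * B (Fin.last n) *
        diagRpow lam (e (Fin.last (n + 1))) := by
  simp only [diagRpowWord, List.ofFn_succ', List.prod_concat, Fin.init, mul_assoc]

lemma diagRpow_mul_diagRpowWord (hlam : ∀ i, 0 ≤ lam i) {n : ℕ} {e : Fin (n + 1) → ℝ}
    (he : 0 ≤ e 0) (B : Fin n → Matrix F F ℂ) {a : ℝ} (ha : 0 ≤ a) :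
    diagRpow lam a * diagRpowWord lam e B = diagRpowWord lam (e + Pi.single 0 a) B := by
  cases n with
  | zero =>
    simp [diagRpowWord_zero, add_comm (e 0), diagRpow_add hlam ha he]
  | succ n =>
    have htail : Fin.tail (e + Pi.single 0 a) = Fin.tail e := by
      ext q
      simp [Fin.tail, Fin.succ_ne_zero]
    rw [diagRpowWord_succ, diagRpowWord_succ, htail]
    simp [add_comm (e 0), diagRpow_add hlam ha he, mul_assoc]

lemma diagRpowWord_mul_diagRpow (hlam : ∀ i, 0 ≤ lam i) {n : ℕ} {e : Fin (n + 1) → ℝ}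
    (he : 0 ≤ e (Fin.last n)) (B : Fin n → Matrix F F ℂ) {b : ℝ} (hb : 0 ≤ b) :
    diagRpowWord lam e B * diagRpow lam b =
      diagRpowWord lam (e + Pi.single (Fin.last n) b) B := by
  simp [diagRpowWord, diagRpow_add hlam he hb, mul_assoc, (Fin.castSucc_lt_last _).ne]

lemma frobSq_diagRpowWord_le_max (hlam : ∀ i, 0 ≤ lam i) {n : ℕ} {e : Fin (n + 2) → ℝ}
    (he : ∀ q, 0 ≤ e q) (B : Fin (n + 1) → Matrix F F ℂ) :
    frobSq (diagRpowWord lam e B) ≤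
      max (frobSq (diagRpowWord lam (e + Pi.single 0 (e (Fin.last _)) -
          Pi.single (Fin.last _) (e (Fin.last _))) B))
        (frobSq (diagRpowWord lam (e - Pi.single 0 (e 0) + Pi.single (Fin.last _) (e 0)) B)) := by
  have h0l : (0 : Fin (n + 2)) ≠ Fin.last (n + 1) := Fin.last_pos.ne
  obtain ⟨c, hc⟩ : ∃ c, c = e - Pi.single 0 (e 0) -
      Pi.single (Fin.last (n + 1)) (e (Fin.last (n + 1))) := ⟨_, rfl⟩
  have hc0 : c 0 = 0 := by simp [hc, h0l]
  have hcl : c (Fin.last (n + 1)) = 0 := by simp [hc, h0l.symm]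
  have hs : 0 ≤ e 0 + e (Fin.last (n + 1)) := add_nonneg (he 0) (he _)
  have hword : diagRpowWord lam e B =
      diagRpow lam (e 0) * diagRpowWord lam c B * diagRpow lam (e (Fin.last (n + 1))) := by
    rw [diagRpow_mul_diagRpowWord hlam hc0.ge B (he 0),
      diagRpowWord_mul_diagRpow hlam (by simp [hcl, h0l.symm]) B (he _), hc]
    congr 1
    abel
  have hleft : diagRpow lam (e 0 + e (Fin.last (n + 1))) * diagRpowWord lam c B =
      diagRpowWord lam (e + Pi.single 0 (e (Fin.last _)) -
          Pi.single (Fin.last _) (e (Fin.last _))) B := by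
    rw [diagRpow_mul_diagRpowWord hlam hc0.ge B hs, hc]
    congr 1
    ext q
    simp only [Pi.add_apply, Pi.sub_apply, Pi.single_apply]
    split_ifs <;> ring
  have hright : diagRpowWord lam c B * diagRpow lam (e 0 + e (Fin.last (n + 1))) =
      diagRpowWord lam (e - Pi.single 0 (e 0) + Pi.single (Fin.last _) (e 0)) B := by
    rw [diagRpowWord_mul_diagRpow hlam hcl.ge B hs, hc]
    congr 1
    ext q
    simp only [Pi.add_apply, Pi.sub_apply, Pi.single_apply]
    split_ifs <;> ring
  rw [hword, ← hleft, ← hright]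
  exact frobSq_diagRpow_mul_mul_diagRpow_le_max hlam (he 0) (he _) _

def DiagRpowWordBound (lam : F → ℝ) (n : ℕ) : Prop :=
  ∀ e : Fin (n + 1) → ℝ, (∀ q, 0 ≤ e q) → ∑ q, e q = 1 / 2 →
    ∀ B : Fin n → Matrix F F ℂ, frobSq (diagRpowWord lam e B) ≤ (∏ q, ‖B q‖) ^ 2

lemma diagRpowWordBound_zero (hlam : ∀ i, 0 ≤ lam i) (hsum : ∑ i, lam i ≤ 1) :
    DiagRpowWordBound lam 0 := by
  intro e _ he_sum B
  rw [Fin.sum_univ_one] at he_sum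
  rwa [diagRpowWord_zero, he_sum, frobSq_diagRpow_half hlam, Fin.prod_univ_zero, one_pow]

lemma DiagRpowWordBound.succ (hlam : ∀ i, 0 ≤ lam i) {n : ℕ} (ih : DiagRpowWordBound lam n) :
    DiagRpowWordBound lam (n + 1) := by
  intro e he he_sum B
  have h0l : (0 : Fin (n + 2)) ≠ Fin.last (n + 1) := Fin.last_pos.ne
  refine (frobSq_diagRpowWord_le_max hlam he B).trans (max_le ?_ ?_)
  · rw [diagRpowWord_succ', Fin.prod_univ_castSucc, mul_pow]
    simp only [Pi.add_apply, Pi.sub_apply, Pi.single_eq_same, Pi.single_eq_of_ne h0l.symm,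
      add_zero, sub_self, diagRpow_zero, mul_one]
    refine (frobSq_mul_le_right _ _).trans
      (mul_le_mul_of_nonneg_right (ih _ ?_ ?_ _) (sq_nonneg _))
    · intro q
      simp only [Fin.init, Pi.add_apply, Pi.sub_apply, Pi.single_apply,
        (Fin.castSucc_lt_last q).ne, if_false, sub_zero]
      split_ifs <;> linarith [he q.castSucc, he (Fin.last _)]
    · have := Fin.sum_univ_castSucc
        (e + Pi.single 0 (e (Fin.last _)) - Pi.single (Fin.last _) (e (Fin.last _)))
      simp [Finset.sum_add_distrib, Finset.sum_sub_distrib, he_sum, h0l.symm] at this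
      simpa [Fin.init, Finset.sum_add_distrib] using this.symm
  · rw [diagRpowWord_succ, Fin.prod_univ_succ, mul_pow]
    simp only [Pi.add_apply, Pi.sub_apply, Pi.single_eq_same, Pi.single_eq_of_ne h0l,
      add_zero, sub_self, diagRpow_zero, one_mul]
    refine (frobSq_mul_le_left _ _).trans
      (mul_le_mul_of_nonneg_left (ih _ ?_ ?_ _) (sq_nonneg _))
    · intro q
      simp only [Fin.tail, Pi.add_apply, Pi.sub_apply, Pi.single_apply, Fin.succ_ne_zero,
        if_false, sub_zero]
      split_ifs <;> linarith [he q.succ, he 0]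
    · have := Fin.sum_univ_succ (e - Pi.single 0 (e 0) + Pi.single (Fin.last _) (e 0))
      simp [Finset.sum_add_distrib, Finset.sum_sub_distrib, he_sum, h0l] at this
      simpa [Fin.tail, Finset.sum_add_distrib, Finset.sum_sub_distrib] using this.symm

theorem diagRpowWordBound (hlam : ∀ i, 0 ≤ lam i) (hsum : ∑ i, lam i ≤ 1) :
    ∀ n, DiagRpowWordBound lam n
  | 0 => diagRpowWordBound_zero hlam hsum
  | n + 1 => (diagRpowWordBound hlam hsum n).succ hlam

end DiagRpow

section Unitary

variable {F : Type*} [Fintype F] [DecidableEq F]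

lemma norm_coe_unitary_le_one (U : unitary (Matrix F F ℂ)) : ‖(U : Matrix F F ℂ)‖ ≤ 1 := by
  rw [← mul_one (U : Matrix F F ℂ), CStarRing.norm_coe_unitary_mul, ← diagonal_one,
    l2_opNorm_diagonal]
  exact (pi_norm_const_le _).trans norm_one.le

lemma frobSq_coe_unitary_mul_le (U : unitary (Matrix F F ℂ)) (X : Matrix F F ℂ) :
    frobSq ((U : Matrix F F ℂ) * X) ≤ frobSq X :=
  (frobSq_mul_le_left _ _).trans <| mul_le_of_le_one_left (frobSq_nonneg X)
    (pow_le_one₀ (norm_nonneg _) (norm_coe_unitary_le_one U))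

lemma frobSq_mul_coe_unitary_le (X : Matrix F F ℂ) (U : unitary (Matrix F F ℂ)) :
    frobSq (X * (U : Matrix F F ℂ)) ≤ frobSq X :=
  (frobSq_mul_le_right _ _).trans <| mul_le_of_le_one_right (frobSq_nonneg X)
    (pow_le_one₀ (norm_nonneg _) (norm_coe_unitary_le_one U))

lemma frobSq_conjStarAlgAut_le (U : unitary (Matrix F F ℂ)) (X : Matrix F F ℂ) :
    frobSq (Unitary.conjStarAlgAut ℂ _ U X) ≤ frobSq X := by
  rw [Unitary.conjStarAlgAut_apply]
  refine (frobSq_mul_coe_unitary_le _ (star U)).trans ?_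
  exact frobSq_coe_unitary_mul_le U X

lemma norm_conjStarAlgAut (U : unitary (Matrix F F ℂ)) (X : Matrix F F ℂ) :
    ‖Unitary.conjStarAlgAut ℂ _ U X‖ = ‖X‖ := by
  rw [Unitary.conjStarAlgAut_apply, ← Unitary.coe_star, CStarRing.norm_mul_coe_unitary,
    CStarRing.norm_coe_unitary_mul]

end Unitary

end Matrix

open Matrix in
theorem density_matrix_hoelder_bound_general
    (F : Type*) [Fintype F] [DecidableEq F]
    (D : Matrix F F ℂ) (hD : D.PosDef) (htr : D.trace = 1)
    (N : ℕ) (r : Fin N → ℝ) (hr0 : ∀ q, 0 ≤ r q) (hrsum : ∑ q, r q ≤ 1 / 2)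
    (A : Fin N → Matrix F F ℂ) :
    Real.sqrt (∑ i : F, ∑ k : F,
        ‖
          (((List.ofFn fun q : Fin N => hD.1.rpow (r q) * A q).prod *
              hD.1.rpow (1 / 2 - ∑ q, r q)) i k)‖ ^ 2) ≤
      ∏ q : Fin N, ‖Matrix.toEuclideanCLM (𝕜 := ℂ) (A q)‖ := by
  set φ := Unitary.conjStarAlgAut ℂ (Matrix F F ℂ) hD.1.eigenvectorUnitary
  have hrpow (a : ℝ) : hD.1.rpow a = φ (diagRpow hD.1.eigenvalues a) := rfl
  have hsum : ∑ i, hD.1.eigenvalues i = 1 := by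
    simpa using congrArg RCLike.re (hD.1.trace_eq_sum_eigenvalues.symm.trans htr)
  have hword :
      (List.ofFn fun q => hD.1.rpow (r q) * A q).prod * hD.1.rpow (1 / 2 - ∑ q, r q) =
        φ (diagRpowWord hD.1.eigenvalues (Fin.snoc r (1 / 2 - ∑ q, r q)) (φ.symm ∘ A)) := by
    simp only [diagRpowWord, map_mul, map_list_prod, List.map_ofFn, Function.comp_def,
      Fin.snoc_castSucc, Fin.snoc_last, StarAlgEquiv.apply_symm_apply, hrpow]
  have hbound := diagRpowWordBound (fun i => (hD.eigenvalues_pos i).le) hsum.le N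
    (Fin.snoc r (1 / 2 - ∑ q, r q))
    (Fin.lastCases (by simpa using hrsum) (by simpa using hr0))
    (by simp [Fin.sum_univ_castSucc]) (φ.symm ∘ A)
  rw [Real.sqrt_le_left (by positivity)]
  change frobSq _ ≤ _
  rw [hword]
  calc _ ≤ _ := frobSq_conjStarAlgAut_le _ _
    _ ≤ (∏ q, ‖(φ.symm ∘ A) q‖) ^ 2 := hbound
    _ = _ := by simp only [Function.comp_apply, φ, Unitary.conjStarAlgAut_symm,
      norm_conjStarAlgAut]; rfl

/-- STATEMENT 15 (Hölder consequence for density matrices): if `D` is a positive definite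
matrix with trace `1`, then for all `r₁, …, r_N ≥ 0` with `r₁ + ⋯ + r_N ≤ 1/2` and all
matrices `A₁, …, A_N`,
`‖D^{r₁} A₁ D^{r₂} A₂ ⋯ D^{r_N} A_N D^{1/2 - (r₁ + ⋯ + r_N)}‖_Frob ≤ ∏ q ‖A_q‖`,
where `‖·‖_Frob` is the Frobenius (Hilbert–Schmidt) norm and `‖·‖` the `ℓ²`-operator norm. -/
theorem density_matrix_hoelder_bound
    (F : Type*) [Fintype F] [DecidableEq F] [Nonempty F]
    (D : Matrix F F ℂ) (hD : D.PosDef) (htr : D.trace = 1)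
    (N : ℕ) (r : Fin N → ℝ) (hr0 : ∀ q, 0 ≤ r q) (hrsum : ∑ q, r q ≤ 1 / 2)
    (A : Fin N → Matrix F F ℂ) :
    Real.sqrt (∑ i : F, ∑ k : F,
        ‖
          (((List.ofFn fun q : Fin N => hD.1.rpow (r q) * A q).prod *
              hD.1.rpow (1 / 2 - ∑ q, r q)) i k)‖ ^ 2) ≤
      ∏ q : Fin N, ‖Matrix.toEuclideanCLM (𝕜 := ℂ) (A q)‖ :=
  density_matrix_hoelder_bound_general F D hD htr N r hr0 hrsum A
end
end
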